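/- arXiv:2511.19944 — 2 statements merged into one kernel-verified Lean document; each statement's English description precedes it below -/
import Mathlib

section
/- For any shift-invariant Markov measure on an irreducible subshift of finite type with adjacency matrix A, the measure-theoretic entropy (entropy rate) is at most log of the spectral radius of A, i.e., the entropy rate is at most the topological entropy. -/
open Matrix BigOperators

def IsZeroOne {n : ℕ} (A : Matrix (Fin n) (Fin n) ℝ) : Prop :=
  ∀ i j, A i j = 0 ∨ A i j = 1

def IsIrreducibleMat {n : ℕ} (A : Matrix (Fin n) (Fin n) ℝ) : Prop :=
  ∀ i j, ∃ k : ℕ, 1 ≤ k ∧ 0 < (A ^ k) i j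

def IsStochastic {n : ℕ} (P : Matrix (Fin n) (Fin n) ℝ) : Prop :=
  (∀ i j, 0 ≤ P i j) ∧ ∀ i, ∑ j, P i j = 1

def IsStationaryDist {n : ℕ} (P : Matrix (Fin n) (Fin n) ℝ) (μ : Fin n → ℝ) : Prop :=
  (∀ i, 0 ≤ μ i) ∧ (∑ i, μ i = 1) ∧ ∀ j, ∑ i, μ i * P i j = μ j

noncomputable def entropyRateFormula {n : ℕ} (P : Matrix (Fin n) (Fin n) ℝ)
    (μ : Fin n → ℝ) : ℝ :=
  -∑ i, μ i * ∑ j, P i j * Real.log (P i j)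

noncomputable def specRad {n : ℕ} (A : Matrix (Fin n) (Fin n) ℝ) : ℝ :=
  sSup {r : ℝ | ∃ z : ℂ, z ∈ spectrum ℂ (A.map (algebraMap ℝ ℂ)) ∧ r = ‖z‖}

/-!
If `l > ρ(A)`, Gelfand's formula gives `‖A ^ k‖ ≤ l ^ k` for some `k ≥ 1` (row-sum norm), so the
truncated Neumann series `v = ∑_{j<k} l⁻ʲ Aʲ 𝟙` is a positive vector with `A v ≤ l v`. Gibbs'
inequality applied to row `i` of `P` against the weights `A i j * v j` gives
`H(P i ·) ≤ log l + log v i - ∑ⱼ P i j log v j`, and averaging over the stationary `μ` cancels the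
`log v` terms, so the entropy rate is at most `log l`. Letting `l ↓ ρ(A)` finishes the proof.
-/

open Real Finset

lemma mul_log_div_le_sub {p q : ℝ} (hp : 0 ≤ p) (hq : 0 ≤ q) (hpq : 0 < p → 0 < q) :
    p * log (q / p) ≤ q - p := by
  rcases hp.eq_or_lt with rfl | hp
  · simpa using hq
  · calc p * log (q / p) ≤ p * (q / p - 1) := by
          gcongr; exact log_le_sub_one_of_pos (div_pos (hpq hp) hp)
      _ = q - p := by field_simp

theorem sum_mul_log_div_le_log {ι : Type*} {s : Finset ι} {p w : ι → ℝ} {c : ℝ}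
    (hp : ∀ i ∈ s, 0 ≤ p i) (hp1 : ∑ i ∈ s, p i = 1) (hw : ∀ i ∈ s, 0 ≤ w i)
    (hpw : ∀ i ∈ s, 0 < p i → 0 < w i) (hc : 0 < c) (hwc : ∑ i ∈ s, w i ≤ c) :
    ∑ i ∈ s, p i * log (w i / p i) ≤ log c := by
  have hterm : ∀ i ∈ s, p i * log (w i / p i) - p i * log c ≤ w i / c - p i := by
    intro i hi
    rcases (hp i hi).eq_or_lt with h0 | h0
    · simpa [← h0] using div_nonneg (hw i hi) hc.le
    · rw [← mul_sub, ← log_div (div_pos (hpw i hi h0) h0).ne' hc.ne', div_right_comm]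
      exact mul_log_div_le_sub h0.le (div_nonneg (hw i hi) hc.le)
        fun _ => div_pos (hpw i hi h0) hc
  have hsum := sum_le_sum hterm
  rw [sum_sub_distrib, sum_sub_distrib, ← sum_mul, ← sum_div, hp1, one_mul] at hsum
  have : (∑ i ∈ s, w i) / c ≤ 1 := (div_le_one hc).2 hwc
  linarith

variable {n : ℕ}

section Entropy

variable {A P : Matrix (Fin n) (Fin n) ℝ} {μ v : Fin n → ℝ}

lemma IsStationaryDist.sum_mul_sum_mul (hμ : IsStationaryDist P μ) (f : Fin n → ℝ) :
    ∑ i, μ i * ∑ j, P i j * f j = ∑ j, μ j * f j := by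
  have hfix : μ ᵥ* P = μ := funext hμ.2.2
  calc ∑ i, μ i * ∑ j, P i j * f j = μ ⬝ᵥ (P *ᵥ f) := rfl
    _ = μ ⬝ᵥ f := by rw [dotProduct_mulVec, hfix]

lemma IsStochastic.sum_mul_log_sub_entropy_le (hA : ∀ i j, 0 ≤ A i j) (hP : IsStochastic P)
    (hcompat : ∀ i j, 0 < P i j → A i j = 1) (hv : ∀ i, 0 < v i) {i : Fin n} {c : ℝ}
    (hc : 0 < c) (hAv : (A *ᵥ v) i ≤ c) :
    ∑ j, P i j * log (v j) - ∑ j, P i j * log (P i j) ≤ log c := by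
  calc ∑ j, P i j * log (v j) - ∑ j, P i j * log (P i j)
      = ∑ j, P i j * log (A i j * v j / P i j) := by
        rw [← sum_sub_distrib]
        refine sum_congr rfl fun j _ => ?_
        rcases (hP.1 i j).eq_or_lt with h0 | h0
        · simp [← h0]
        · rw [hcompat i j h0, one_mul, log_div (hv j).ne' h0.ne', mul_sub]
    _ ≤ log c :=
        sum_mul_log_div_le_log (fun j _ => hP.1 i j) (hP.2 i)
          (fun j _ => mul_nonneg (hA i j) (hv j).le)
          (fun j _ h => by rw [hcompat i j h, one_mul]; exact hv j) hc hAv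

theorem entropyRateFormula_le_log_of_mulVec_le (hA : ∀ i j, 0 ≤ A i j) (hP : IsStochastic P)
    (hcompat : ∀ i j, 0 < P i j → A i j = 1) (hμ : IsStationaryDist P μ) {l : ℝ} (hl : 0 < l)
    (hv : ∀ i, 0 < v i) (hAv : A *ᵥ v ≤ l • v) :
    entropyRateFormula P μ ≤ log l := by
  have hrow (i : Fin n) :
      -∑ j, P i j * log (P i j) ≤ log l + log (v i) - ∑ j, P i j * log (v j) := by
    have := hP.sum_mul_log_sub_entropy_le hA hcompat hv (mul_pos hl (hv i)) (hAv i)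
    rw [log_mul hl.ne' (hv i).ne'] at this
    linarith
  calc entropyRateFormula P μ = ∑ i, μ i * -∑ j, P i j * log (P i j) := by
        simp only [entropyRateFormula, mul_neg, sum_neg_distrib]
    _ ≤ ∑ i, μ i * (log l + log (v i) - ∑ j, P i j * log (v j)) :=
        sum_le_sum fun i _ => mul_le_mul_of_nonneg_left (hrow i) (hμ.1 i)
    _ = log l := by
        simp only [mul_sub, mul_add, sum_sub_distrib, sum_add_distrib, ← sum_mul, hμ.2.1,
          hμ.sum_mul_sum_mul]
        ring

end Entropy

lemma specRad_nonneg (A : Matrix (Fin n) (Fin n) ℝ) : 0 ≤ specRad A :=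
  Real.sSup_nonneg <| by rintro _ ⟨z, -, rfl⟩; exact norm_nonneg z

section LinftyOpNorm

attribute [local instance] Matrix.linftyOpNormedAddCommGroup Matrix.linftyOpNormedRing
  Matrix.linftyOpNormedAlgebra

lemma Matrix.linfty_opNorm_map_ofReal {m k : Type*} [Fintype m] [Fintype k] (M : Matrix m k ℝ) :
    ‖M.map (algebraMap ℝ ℂ)‖ = ‖M‖ := by
  simp [linfty_opNorm_def]

lemma Matrix.sum_apply_le_linfty_opNorm {m k : Type*} [Fintype m] [Fintype k] (M : Matrix m k ℝ)
    (i : m) :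
    ∑ j, M i j ≤ ‖M‖ := by
  rw [linfty_opNorm_def]
  calc ∑ j, M i j ≤ ∑ j, ‖M i j‖ := sum_le_sum fun j _ => le_norm_self _
    _ = ((∑ j, ‖M i j‖₊ : NNReal) : ℝ) := by push_cast; rfl
    _ ≤ _ := by
      exact_mod_cast Finset.le_sup (f := fun i => ∑ j, ‖M i j‖₊) (mem_univ i)

lemma spectralRadius_map_le_specRad (A : Matrix (Fin n) (Fin n) ℝ) :
    spectralRadius ℂ (A.map (algebraMap ℝ ℂ)) ≤ ENNReal.ofReal (specRad A) := by
  have hbdd : BddAbove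
      {r : ℝ | ∃ z : ℂ, z ∈ spectrum ℂ (A.map (algebraMap ℝ ℂ)) ∧ r = ‖z‖} :=
    ⟨_, by rintro _ ⟨z, hz, rfl⟩; exact spectrum.norm_le_norm_mul_of_mem hz⟩
  refine iSup₂_le fun z hz => ?_
  rw [← ENNReal.ofReal_coe_nnreal, coe_nnnorm]
  exact ENNReal.ofReal_le_ofReal (le_csSup hbdd ⟨z, hz, rfl⟩)

theorem exists_pow_row_sum_le {A : Matrix (Fin n) (Fin n) ℝ} {l : ℝ} (hl : specRad A < l) :
    ∃ k, 0 < k ∧ ∀ i, ∑ j, (A ^ k) i j ≤ l ^ k := by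
  have : CompleteSpace (Matrix (Fin n) (Fin n) ℂ) := FiniteDimensional.complete ℂ _
  have hl0 : 0 < l := (specRad_nonneg A).trans_lt hl
  have hρl : spectralRadius ℂ (A.map (algebraMap ℝ ℂ)) < ENNReal.ofReal l :=
    (spectralRadius_map_le_specRad A).trans_lt ((ENNReal.ofReal_lt_ofReal_iff hl0).2 hl)
  obtain ⟨k, hk, hlt⟩ := ((Filter.eventually_gt_atTop 0).and
    ((spectrum.pow_norm_pow_one_div_tendsto_nhds_spectralRadius _).eventually_lt_const
      hρl)).exists
  rw [ENNReal.ofReal_lt_ofReal_iff hl0, one_div, ← (Matrix.map_pow ..),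
    Matrix.linfty_opNorm_map_ofReal, rpow_inv_lt_iff_of_pos (norm_nonneg _) hl0.le
      (Nat.cast_pos.2 hk), rpow_natCast] at hlt
  exact ⟨k, hk, fun i => (Matrix.sum_apply_le_linfty_opNorm _ i).trans hlt.le⟩

end LinftyOpNorm

theorem exists_pos_mulVec_le_smul {A : Matrix (Fin n) (Fin n) ℝ} (hA : ∀ i j, 0 ≤ A i j) {l : ℝ}
    (hl : specRad A < l) : ∃ v : Fin n → ℝ, (∀ i, 0 < v i) ∧ A *ᵥ v ≤ l • v := by
  obtain ⟨k, hk, hrow⟩ := exists_pow_row_sum_le hl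
  obtain ⟨m, rfl⟩ := Nat.exists_eq_add_one_of_ne_zero hk.ne'
  have hl0 : 0 < l := (specRad_nonneg A).trans_lt hl
  set u : ℕ → Fin n → ℝ := fun k => (l⁻¹) ^ k • (A ^ k *ᵥ 1)
  have hu0 : u 0 = 1 := by simp [u]
  have hu_nonneg (k : ℕ) : 0 ≤ u k := smul_nonneg (by positivity) fun i =>
    show 0 ≤ ∑ j, (A ^ k) i j * 1 from
      sum_nonneg fun j _ => mul_nonneg (pow_apply_nonneg hA k i j) zero_le_one
  have hAu (k : ℕ) : A *ᵥ u k = l • u (k + 1) := by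
    simp only [u, mulVec_smul, mulVec_mulVec, ← pow_succ', smul_smul, pow_succ]
    field_simp
  have hu_last : u (m + 1) ≤ u 0 := fun i => by
    rw [hu0]
    change (l⁻¹) ^ (m + 1) * ∑ j, (A ^ (m + 1)) i j * 1 ≤ 1
    simpa only [mul_one, inv_pow, inv_mul_le_one₀ (pow_pos hl0 _)] using hrow i
  refine ⟨∑ k ∈ range (m + 1), u k, fun i => ?_, ?_⟩
  · have := single_le_sum (fun k _ => hu_nonneg k) (mem_range.2 m.succ_pos) i
    rw [hu0] at this
    exact one_pos.trans_le this
  · calc A *ᵥ ∑ k ∈ range (m + 1), u k = l • (∑ k ∈ range m, u (k + 1) + u (m + 1)) := by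
          rw [mulVec_sum, ← sum_range_succ, smul_sum]
          exact sum_congr rfl fun k _ => hAu k
      _ ≤ l • (∑ k ∈ range m, u (k + 1) + u 0) := by gcongr
      _ = l • ∑ k ∈ range (m + 1), u k := by rw [sum_range_succ']

theorem markov_entropy_rate_le_topological_entropy_general {n : ℕ}
    (A P : Matrix (Fin n) (Fin n) ℝ) (μ : Fin n → ℝ)
    (h01 : IsZeroOne A)
    (hP : IsStochastic P)
    (hcompat : ∀ i j, 0 < P i j → A i j = 1)
    (hμ : IsStationaryDist P μ) :
    entropyRateFormula P μ ≤ Real.log (specRad A) := by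
  have hA : ∀ i j, 0 ≤ A i j := fun i j => (h01 i j).elim (·.ge) (·.symm ▸ zero_le_one)
  have hexp : exp (entropyRateFormula P μ) ≤ specRad A := by
    refine le_of_forall_gt_imp_ge_of_dense fun l hl => ?_
    have hl0 : 0 < l := (specRad_nonneg A).trans_lt hl
    obtain ⟨v, hv, hAv⟩ := exists_pos_mulVec_le_smul hA hl
    exact (le_log_iff_exp_le hl0).1
      (entropyRateFormula_le_log_of_mulVec_le hA hP hcompat hμ hl0 hv hAv)
  calc entropyRateFormula P μ = log (exp (entropyRateFormula P μ)) := (log_exp _).symm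
    _ ≤ log (specRad A) := log_le_log (exp_pos _) hexp

/-- The entropy rate of any shift-invariant Markov measure compatible with an
irreducible 0-1 matrix `A` is at most the topological entropy `log (specRad A)`. -/
theorem markov_entropy_rate_le_topological_entropy {n : ℕ}
    (A P : Matrix (Fin n) (Fin n) ℝ) (μ : Fin n → ℝ)
    (h01 : IsZeroOne A) (hirr : IsIrreducibleMat A)
    (hP : IsStochastic P)
    (hcompat : ∀ i j, 0 < P i j → A i j = 1)
    (hμ : IsStationaryDist P μ) :
    entropyRateFormula P μ ≤ Real.log (specRad A) :=
  markov_entropy_rate_le_topological_entropy_general A P μ h01 hP hcompat hμ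
end

section
/- Among all Markov measures compatible with an irreducible 0-1 matrix A, the maximal entropy rate log ρ(A) is achieved by the Parry measure, i.e., the stochastic matrix P_{ij} = A_{ij} v_j / (ρ(A) v_i), where v is a right Perron eigenvector of A. -/
open Matrix BigOperators

/-! The Parry matrix `P` satisfies `log P i j = log v j - log v i - log ρ` on the support of `A`:
a coboundary minus a constant, so its average against any stationary Markov chain supported on
`A` is `-log ρ`. Gibbs' inequality, applied row by row, bounds the entropy rate of such a chain by
this cross entropy `log ρ`, with equality for `P` itself. -/

open Real

theorem sum_mul_log_le_sum_mul_log_self {ι : Type*} [Fintype ι] {p q : ι → ℝ}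
    (hp : ∀ i, 0 ≤ p i) (hq : ∀ i, 0 ≤ q i) (hpq : ∀ i, 0 < q i → 0 < p i)
    (hsum : ∑ i, p i ≤ ∑ i, q i) :
    ∑ i, q i * log (p i) ≤ ∑ i, q i * log (q i) := by
  have hterm : ∀ i, q i * log (p i) - q i * log (q i) ≤ p i - q i := by
    intro i
    rcases (hq i).eq_or_lt with hqi | hqi
    · simpa [← hqi] using hp i
    have hpi := hpq i hqi
    calc q i * log (p i) - q i * log (q i) = q i * log (p i / q i) := by
          rw [log_div hpi.ne' hqi.ne']; ring
      _ ≤ q i * (p i / q i - 1) :=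
          mul_le_mul_of_nonneg_left (log_le_sub_one_of_pos (div_pos hpi hqi)) hqi.le
      _ = p i - q i := by field_simp
  have := Finset.sum_le_sum fun i (_ : i ∈ Finset.univ) => hterm i
  rw [Finset.sum_sub_distrib, Finset.sum_sub_distrib] at this
  linarith

variable {n : ℕ}

theorem IsZeroOne.nonneg {A : Matrix (Fin n) (Fin n) ℝ} (h : IsZeroOne A) (i j : Fin n) :
    0 ≤ A i j := by
  rcases h i j with h | h <;> simp [h]

theorem IsIrreducibleMat.exists_pos {A : Matrix (Fin n) (Fin n) ℝ} (hirr : IsIrreducibleMat A)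
    (hA : ∀ i j, 0 ≤ A i j) (i : Fin n) : ∃ j, 0 < A i j := by
  obtain ⟨k, hk, hpos⟩ := hirr i i
  obtain ⟨m, rfl⟩ := Nat.exists_eq_add_of_le' hk
  rw [pow_succ', mul_apply] at hpos
  obtain ⟨j, -, hj⟩ := Finset.exists_ne_zero_of_sum_ne_zero hpos.ne'
  exact ⟨j, (hA i j).lt_of_ne' (left_ne_zero_of_mul hj)⟩

theorem IsIrreducibleMat.pos_of_mulVec_eq_smul {A : Matrix (Fin n) (Fin n) ℝ} {v : Fin n → ℝ}
    {r : ℝ} (hirr : IsIrreducibleMat A) (hA : ∀ i j, 0 ≤ A i j) (hv : ∀ i, 0 < v i)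
    (heig : A *ᵥ v = r • v) (i : Fin n) : 0 < r := by
  obtain ⟨j, hj⟩ := hirr.exists_pos hA i
  have hsum : 0 < (A *ᵥ v) i :=
    Finset.sum_pos' (fun k _ => mul_nonneg (hA i k) (hv k).le)
      ⟨j, Finset.mem_univ j, mul_pos hj (hv j)⟩
  rw [heig, Pi.smul_apply, smul_eq_mul] at hsum
  exact pos_of_mul_pos_left hsum (hv i).le

theorem IsStationaryDist.sum_mul_sum_mul_sub_sub {Q : Matrix (Fin n) (Fin n) ℝ}
    {ν : Fin n → ℝ} (hν : IsStationaryDist Q ν) (hQ : IsStochastic Q) (f : Fin n → ℝ)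
    (c : ℝ) : ∑ i, ν i * ∑ j, Q i j * (f j - f i - c) = -c := by
  have hrow : ∀ i, ∑ j, Q i j * (f j - f i - c) = ∑ j, Q i j * f j - (f i + c) := by
    intro i
    rw [← mul_one (f i + c), ← hQ.2 i, Finset.mul_sum, ← Finset.sum_sub_distrib]
    exact Finset.sum_congr rfl fun j _ => by ring
  have hstat : ∑ i, ν i * ∑ j, Q i j * f j = ∑ j, ν j * f j := by
    simp only [Finset.mul_sum, ← mul_assoc]
    rw [Finset.sum_comm]
    simp only [← Finset.sum_mul, hν.2.2]
  simp only [hrow]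
  calc ∑ i, ν i * (∑ j, Q i j * f j - (f i + c))
      = ∑ i, ν i * ∑ j, Q i j * f j - ∑ i, ν i * f i - (∑ i, ν i) * c := by
        simp only [mul_sub, Finset.sum_sub_distrib, mul_add, Finset.sum_add_distrib,
          Finset.sum_mul]
        ring
    _ = -c := by rw [hstat, hν.2.1]; ring

theorem entropyRateFormula_le_neg_sum_mul_sum_mul_log {P Q : Matrix (Fin n) (Fin n) ℝ}
    {ν : Fin n → ℝ} (hP : IsStochastic P) (hQ : IsStochastic Q)
    (hPQ : ∀ i j, 0 < Q i j → 0 < P i j) (hν : IsStationaryDist Q ν) :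
    entropyRateFormula Q ν ≤ -∑ i, ν i * ∑ j, Q i j * log (P i j) := by
  refine neg_le_neg (Finset.sum_le_sum fun i _ => mul_le_mul_of_nonneg_left ?_ (hν.1 i))
  exact sum_mul_log_le_sum_mul_log_self (hP.1 i) (hQ.1 i) (hPQ i) (by rw [hP.2 i, hQ.2 i])

noncomputable def parryMatrix (A : Matrix (Fin n) (Fin n) ℝ) (v : Fin n → ℝ) (r : ℝ) :
    Matrix (Fin n) (Fin n) ℝ :=
  of fun i j => A i j * v j / (r * v i)

section parryMatrix

variable {A : Matrix (Fin n) (Fin n) ℝ} {v : Fin n → ℝ} {r : ℝ}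

theorem isStochastic_parryMatrix (hv : ∀ i, 0 < v i) (hr : 0 < r) (hA : ∀ i j, 0 ≤ A i j)
    (heig : A *ᵥ v = r • v) : IsStochastic (parryMatrix A v r) := by
  refine ⟨fun i j => div_nonneg (mul_nonneg (hA i j) (hv j).le) (mul_pos hr (hv i)).le,
    fun i => ?_⟩
  have hrow : ∑ j, A i j * v j = r * v i := congrFun heig i
  simp only [parryMatrix, of_apply, ← Finset.sum_div, hrow]
  exact div_self (mul_pos hr (hv i)).ne'

theorem parryMatrix_pos (hv : ∀ i, 0 < v i) (hr : 0 < r) {i j : Fin n} (hA : A i j = 1) :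
    0 < parryMatrix A v r i j := by
  simpa [parryMatrix, hA] using div_pos (hv j) (mul_pos hr (hv i))

theorem log_parryMatrix (hv : ∀ i, 0 < v i) (hr : 0 < r) {i j : Fin n} (hA : A i j = 1) :
    log (parryMatrix A v r i j) = log (v j) - log (v i) - log r := by
  rw [parryMatrix, of_apply, hA, one_mul, log_div (hv j).ne' (mul_pos hr (hv i)).ne',
    log_mul hr.ne' (hv i).ne']
  ring

theorem IsStationaryDist.sum_mul_sum_mul_log_parryMatrix {Q : Matrix (Fin n) (Fin n) ℝ}
    {ν : Fin n → ℝ} (hv : ∀ i, 0 < v i) (hr : 0 < r) (hν : IsStationaryDist Q ν)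
    (hQ : IsStochastic Q) (hQA : ∀ i j, 0 < Q i j → A i j = 1) :
    ∑ i, ν i * ∑ j, Q i j * log (parryMatrix A v r i j) = -log r := by
  have hterm : ∀ i j, Q i j * log (parryMatrix A v r i j)
      = Q i j * (log (v j) - log (v i) - log r) := by
    intro i j
    rcases (hQ.1 i j).eq_or_lt with hq | hq
    · simp [← hq]
    · rw [log_parryMatrix hv hr (hQA i j hq)]
  simp only [hterm]
  exact hν.sum_mul_sum_mul_sub_sub hQ (fun i => log (v i)) (log r)

end parryMatrix

/-- The Parry measure: given an irreducible 0-1 matrix `A` with positive right Perron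
eigenvector `v` (so `A *ᵥ v = specRad A • v`), the stochastic matrix
`P i j = A i j * v j / (specRad A * v i)` is compatible with `A`, its entropy rate is
exactly `log (specRad A)`, and this is maximal among all Markov measures compatible
with `A`. -/
theorem parry_measure_maximal_entropy {n : ℕ}
    (A : Matrix (Fin n) (Fin n) ℝ) (v : Fin n → ℝ)
    (h01 : IsZeroOne A) (hirr : IsIrreducibleMat A)
    (hv : ∀ i, 0 < v i) (heig : A *ᵥ v = specRad A • v)
    (P : Matrix (Fin n) (Fin n) ℝ)
    (hPdef : ∀ i j, P i j = A i j * v j / (specRad A * v i)) :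
    IsStochastic P ∧ (∀ i j, 0 < P i j → A i j = 1) ∧
      (∀ μ : Fin n → ℝ, IsStationaryDist P μ →
        entropyRateFormula P μ = Real.log (specRad A)) ∧
      (∀ Q : Matrix (Fin n) (Fin n) ℝ, ∀ ν : Fin n → ℝ,
        IsStochastic Q → (∀ i j, 0 < Q i j → A i j = 1) → IsStationaryDist Q ν →
        entropyRateFormula Q ν ≤ Real.log (specRad A)) := by
  rcases Nat.eq_zero_or_pos n with rfl | hn
  · simp [IsStochastic, IsStationaryDist]
  have hρ : 0 < specRad A := hirr.pos_of_mulVec_eq_smul h01.nonneg hv heig ⟨0, hn⟩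
  obtain rfl : P = parryMatrix A v (specRad A) := Matrix.ext hPdef
  have hP := isStochastic_parryMatrix hv hρ h01.nonneg heig
  have hPA : ∀ i j, 0 < parryMatrix A v (specRad A) i j → A i j = 1 := fun i j hpos =>
    (h01 i j).resolve_left fun h0 => by simp [parryMatrix, h0] at hpos
  refine ⟨hP, hPA, fun μ hμ => ?_, fun Q ν hQ hQA hν => ?_⟩
  · rw [entropyRateFormula, hμ.sum_mul_sum_mul_log_parryMatrix hv hρ hP hPA, neg_neg]
  · calc entropyRateFormula Q ν
        ≤ -∑ i, ν i * ∑ j, Q i j * log (parryMatrix A v (specRad A) i j) :=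
          entropyRateFormula_le_neg_sum_mul_sum_mul_log hP hQ
            (fun i j hq => parryMatrix_pos hv hρ (hQA i j hq)) hν
      _ = log (specRad A) := by
          rw [hν.sum_mul_sum_mul_log_parryMatrix hv hρ hQ hQA, neg_neg]
end
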